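/- Let k be a field, G a finite group whose order is not divisible by the characteristic of k, and R a k-algebra. Then R is von Neumann regular if and only if the group algebra R[G] is von Neumann regular. -/

import Mathlib

/-!
Regularity descends from `R[G]` to `R` along the augmentation `R[G] → R`, a surjective ring map.
Conversely, over a regular ring every finitely generated right ideal contains a left identity
for its generators; applied to the coordinates of a vector of a free left module, this splits off
every cyclic, hence every finitely generated, submodule. For `a : R[G]` the left ideal `R[G] a` is
spanned over `R` by the translates `g a`, so it has an `R`-linear projection; as `|G|` is
invertible, averaging its conjugates by `G` (Maschke's trick) gives an `R[G]`-linear projection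
`p` onto `R[G] a`, and writing `p 1 = b a` yields `a = p a = a p 1 = a b a`.
-/

/-- A ring `A` is von Neumann regular if every `a : A` admits `x : A`
with `a * x * a = a`. -/
def IsVonNeumannRegularRing (A : Type*) [Ring A] : Prop :=
  ∀ a : A, ∃ x : A, a * x * a = a

open Submodule
open scoped MonoidAlgebra

theorem LinearMap.exists_isProj_span_finset {R M : Type*} [Ring R] [AddCommGroup M] [Module R M]
    (h : ∀ w : M, ∃ q : M →ₗ[R] M, LinearMap.IsProj (span R {w}) q)
    (s : Finset M) : ∃ π : M →ₗ[R] M, LinearMap.IsProj (span R (s : Set M)) π := by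
  classical
  induction s using Finset.induction_on with
  | empty =>
    exact ⟨0, fun _ => zero_mem _, fun x hx => by
      rw [Finset.coe_empty, span_empty, mem_bot] at hx; simp [hx]⟩
  | @insert a s _ ih =>
    obtain ⟨π, hπ⟩ := ih
    obtain ⟨q, hq⟩ := h (a - π a)
    have hspan : span R (s : Set M) ≤ span R (insert a s : Finset M) := span_mono (by simp)
    have hw : a - π a ∈ span R (insert a s : Finset M) :=
      sub_mem (subset_span (by simp)) (hspan (hπ.map_mem a))
    refine ⟨π + q ∘ₗ (LinearMap.id - π), fun x => ?_, fun x hx => ?_⟩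
    · exact add_mem (hspan (hπ.map_mem x)) (span_le.mpr (by simpa using hw) (hq.map_mem _))
    · rw [Finset.coe_insert, mem_span_insert] at hx
      obtain ⟨r, y, hy, rfl⟩ := hx
      have hqa : q (a - π a) = a - π a := hq.map_id _ (mem_span_singleton_self _)
      simp only [LinearMap.add_apply, LinearMap.comp_apply, LinearMap.sub_apply,
        LinearMap.id_apply, map_add, map_smul, hπ.map_id y hy, sub_self, map_zero, add_zero, hqa]
      rw [add_sub_cancel]

namespace MonoidAlgebra

section Monoid

variable {R M V : Type*} [Ring R] [Monoid M] [AddCommGroup V] [Module R[M] V] [Module R V]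
  [IsScalarTower R R[M] V]

theorem single_smul_eq_smul_of_smul (m : M) (r : R) (v : V) :
    single m r • v = r • of R M m • v := by
  rw [of_apply, ← smul_assoc, smul_single', mul_one]

theorem of_smul_smul_comm (m : M) (r : R) (v : V) : of R M m • r • v = r • of R M m • v := by
  rw [← single_smul_eq_smul_of_smul, ← smul_one_smul R[M] r v, smul_smul, one_def, smul_single',
    mul_one, of_apply, single_mul_single, mul_one, one_mul]

end Monoid

theorem restrictScalars_span_singleton {R M : Type*} [Ring R] [Monoid M] (a : R[M]) :
    (span R[M] {a}).restrictScalars R = span R (Set.range fun m => of R M m * a) := by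
  refine le_antisymm (fun x hx => ?_) (span_le.mpr ?_)
  · obtain ⟨b, rfl⟩ := mem_span_singleton.mp hx
    clear hx
    induction b using MonoidAlgebra.induction_linear with
    | zero => simp
    | add b c hb hc => exact add_smul b c a ▸ add_mem hb hc
    | single m r =>
      rw [single_smul_eq_smul_of_smul]
      exact smul_mem _ r (subset_span ⟨m, rfl⟩)
  · rintro _ ⟨m, rfl⟩
    exact smul_mem _ (of R M m) (mem_span_singleton_self a)

section Group

variable {R G V : Type*} [Ring R] [Group G] [Fintype G] [AddCommGroup V] [Module R[G] V]
  [Module R V]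

variable (G) in
noncomputable def sumOfConjugates (π : V →ₗ[R] V) (v : V) : V :=
  ∑ g : G, of R G g⁻¹ • π (of R G g • v)

theorem sumOfConjugates_add (π : V →ₗ[R] V) (v w : V) :
    sumOfConjugates G π (v + w) = sumOfConjugates G π v + sumOfConjugates G π w := by
  simp only [sumOfConjugates, smul_add, map_add, Finset.sum_add_distrib]

theorem sumOfConjugates_of_smul (π : V →ₗ[R] V) (h : G) (v : V) :
    sumOfConjugates G π (of R G h • v) = of R G h • sumOfConjugates G π v := by
  rw [sumOfConjugates, sumOfConjugates, Finset.smul_sum]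
  refine Fintype.sum_equiv (Equiv.mulRight h) _ _ fun g => ?_
  simp only [Equiv.coe_mulRight, smul_smul, ← map_mul, mul_inv_rev, mul_inv_cancel_left]

variable [IsScalarTower R R[G] V]

theorem sumOfConjugates_smul (π : V →ₗ[R] V) (r : R) (v : V) :
    sumOfConjugates G π (r • v) = r • sumOfConjugates G π v := by
  simp only [sumOfConjugates, Finset.smul_sum, of_smul_smul_comm, map_smul]

variable [Invertible (Fintype.card G : R)]

variable (G) in
noncomputable def averageConjugates (π : V →ₗ[R] V) : V →ₗ[R[G]] V where
  toFun v := ⅟(Fintype.card G : R) • sumOfConjugates G π v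
  map_add' v w := by rw [sumOfConjugates_add, smul_add]
  map_smul' a v := by
    induction a using MonoidAlgebra.induction_linear with
    | zero => simp [sumOfConjugates]
    | add a b ha hb =>
      simp only [RingHom.id_apply] at ha hb ⊢
      rw [add_smul, sumOfConjugates_add, smul_add, ha, hb, add_smul]
    | single h r =>
      rw [RingHom.id_apply, single_smul_eq_smul_of_smul, sumOfConjugates_smul,
        sumOfConjugates_of_smul, single_smul_eq_smul_of_smul, of_smul_smul_comm, smul_smul,
        smul_smul, ((Nat.cast_commute _ r).invOf_left).eq]

theorem isProj_averageConjugates {N : Submodule R[G] V} {π : V →ₗ[R] V}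
    (hπ : LinearMap.IsProj (N.restrictScalars R) π) :
    LinearMap.IsProj N (averageConjugates G π) where
  map_mem v := N.smul_of_tower_mem _ <| N.sum_mem fun g _ => N.smul_mem _ (hπ.map_mem _)
  map_id v hv := by
    have hterm : ∀ g : G, of R G g⁻¹ • π (of R G g • v) = v := fun g => by
      rw [hπ.map_id _ (N.smul_mem _ hv), smul_smul, ← map_mul, inv_mul_cancel, map_one, one_smul]
    change ⅟(Fintype.card G : R) • ∑ g : G, _ = v
    rw [Finset.sum_congr rfl fun g _ => hterm g, Finset.sum_const, Finset.card_univ,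
      ← Nat.cast_smul_eq_nsmul R, smul_smul, invOf_mul_self, one_smul]

end Group

end MonoidAlgebra

namespace IsVonNeumannRegularRing

theorem of_forall_exists_isProj {A : Type*} [Ring A]
    (h : ∀ a : A, ∃ p : A →ₗ[A] A, LinearMap.IsProj (span A {a}) p) :
    IsVonNeumannRegularRing A := by
  intro a
  obtain ⟨p, hp⟩ := h a
  obtain ⟨b, hb⟩ := mem_span_singleton.mp (hp.map_mem 1)
  refine ⟨b, ?_⟩
  calc a * b * a = a • p 1 := by rw [← hb, smul_eq_mul, smul_eq_mul, mul_assoc]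
    _ = p a := by rw [← map_smul, smul_eq_mul, mul_one]
    _ = a := hp.map_id a (mem_span_singleton_self a)

theorem of_surjective {A B : Type*} [Ring A] [Ring B] (hA : IsVonNeumannRegularRing A)
    (f : A →+* B) (hf : Function.Surjective f) : IsVonNeumannRegularRing B := by
  intro b
  obtain ⟨a, rfl⟩ := hf b
  obtain ⟨x, hx⟩ := hA a
  exact ⟨f x, by rw [← map_mul, ← map_mul, hx]⟩

theorem of_monoidAlgebra {R G : Type*} [Ring R] [Monoid G]
    (h : IsVonNeumannRegularRing R[G]) : IsVonNeumannRegularRing R :=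
  h.of_surjective (MonoidAlgebra.liftNCRingHom (.id R) 1 fun _ _ => .one_right _)
    fun r => ⟨MonoidAlgebra.single 1 r, by simp⟩

variable {R : Type*} [Ring R]

-- `span Rᵐᵒᵖ s` is the right ideal generated by `s`.
theorem exists_mem_span_mul_eq_self (hR : IsVonNeumannRegularRing R) {ι : Type*} (w : ι → R)
    (s : Finset ι) : ∃ f ∈ span Rᵐᵒᵖ (w '' s), ∀ i ∈ s, f * w i = w i := by
  classical
  induction s using Finset.induction_on with
  | empty => exact ⟨0, zero_mem _, by simp⟩
  | @insert j s _ ih =>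
    obtain ⟨f, hf_mem, hf⟩ := ih
    set u := w j - f * w j
    obtain ⟨x, hx⟩ := hR u
    have hspan : span Rᵐᵒᵖ (w '' s) ≤ span Rᵐᵒᵖ (w '' ↑(insert j s)) :=
      span_mono (Set.image_mono (by simp))
    have hu : u ∈ span Rᵐᵒᵖ (w '' ↑(insert j s)) :=
      sub_mem (subset_span ⟨j, by simp⟩) (hspan (smul_mem _ (.op (w j)) hf_mem))
    -- `u * x * u = u` fixes `w j = u + f * w j`, and `(1 - f) * w i = 0` for the old `w i`.
    refine ⟨u * (x * (1 - f)) + f, add_mem (smul_mem _ _ hu) (hspan hf_mem), fun i hi => ?_⟩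
    have hfi : (1 - f) * w i = w i - f * w i := by rw [sub_mul, one_mul]
    rw [add_mul, mul_assoc, mul_assoc, hfi]
    rcases Finset.mem_insert.mp hi with rfl | hi
    · rw [← mul_assoc, hx, sub_add_cancel]
    · rw [hf i hi, sub_self, mul_zero, mul_zero, zero_add]

theorem exists_isProj_span_singleton (hR : IsVonNeumannRegularRing R) {ι M : Type*}
    [AddCommGroup M] [Module R M] (b : Module.Basis ι R M) (w : M) :
    ∃ q : M →ₗ[R] M, LinearMap.IsProj (span R {w}) q := by
  classical
  obtain ⟨f, hf_mem, hf⟩ := hR.exists_mem_span_mul_eq_self (b.repr w) (b.repr w).support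
  obtain ⟨c, hc⟩ := (mem_span_image_finset_iff_exists_fun' (R := Rᵐᵒᵖ)).mp hf_mem
  let φ : M →ₗ[R] R := ∑ i ∈ (b.repr w).support, (b.coord i).smulRight (c i).unop
  have hφ : φ w • w = w := by
    have hφf : φ w = f := by simp [φ, ← hc]
    refine b.repr.injective (Finsupp.ext fun i => ?_)
    by_cases hi : i ∈ (b.repr w).support
    · simp [hφf, hf i hi]
    · simp [Finsupp.notMem_support_iff.mp hi]
  refine ⟨φ.smulRight w, fun x => mem_span_singleton.mpr ⟨φ x, rfl⟩, fun x hx => ?_⟩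
  obtain ⟨r, rfl⟩ := mem_span_singleton.mp hx
  simp [hφ]

theorem monoidAlgebra (hR : IsVonNeumannRegularRing R) {G : Type*} [Group G] [Fintype G]
    [Invertible (Fintype.card G : R)] : IsVonNeumannRegularRing R[G] := by
  classical
  refine of_forall_exists_isProj fun a => ?_
  obtain ⟨π, hπ⟩ := LinearMap.exists_isProj_span_finset
    (hR.exists_isProj_span_singleton (MonoidAlgebra.basis G R))
    (Finset.univ.image fun g => MonoidAlgebra.of R G g * a)
  rw [Finset.coe_image, Finset.coe_univ, Set.image_univ,
    ← MonoidAlgebra.restrictScalars_span_singleton] at hπ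
  exact ⟨_, MonoidAlgebra.isProj_averageConjugates hπ⟩

end IsVonNeumannRegularRing

theorem isVonNeumannRegularRing_iff_monoidAlgebra
    {k : Type*} [Field k] (G : Type*) [Group G] [Fintype G]
    (hG : ¬ (ringChar k ∣ Fintype.card G))
    (R : Type*) [Ring R] [Algebra k R] :
    IsVonNeumannRegularRing R ↔ IsVonNeumannRegularRing (MonoidAlgebra R G) := by
  have : Invertible (Fintype.card G : R) :=
    ((invertibleOfRingCharNotDvd hG).map (algebraMap k R)).copy _ (map_natCast _ _).symm
  exact ⟨fun hR => hR.monoidAlgebra (G := G), .of_monoidAlgebra⟩
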